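/- Let R be a commutative ring, s, t, x ∈ R, and n a natural number. Then Σ_{ℓ=0}^{n} C(n,ℓ) · x^ℓ · P_{n,ℓ}(s,t) = P_{n,0}(s, t + xt), i.e., the associated polynomial Q_n(x) equals the permanent of the n×n matrix s·I_n + (t+xt)·J_n. -/

import Mathlib

/-- The permanent of a square matrix: `per(M) = Σ_{σ} Π_i M_{i, σ(i)}`. -/
def permanent {α : Type*} [Fintype α] [DecidableEq α] {R : Type*} [CommSemiring R]
    (M : Matrix α α R) : R :=
  ∑ σ : Equiv.Perm α, ∏ i, M i (σ i)

/-- The `n×n` matrix `M_{n,ℓ}(s,t)` whose first `n-ℓ` diagonal entries are `s+t`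
and all of whose other entries are `t`: the `(i,j)`-entry is
`t + s·[i = j and i ≤ n-ℓ]` (`0`-indexed: `i < n-ℓ`). -/
def Mmat {R : Type*} [CommRing R] (n ℓ : ℕ) (s t : R) : Matrix (Fin n) (Fin n) R :=
  Matrix.of fun i j => t + if i = j ∧ (i : ℕ) < n - ℓ then s else 0

/-- `P_{n,ℓ}(s,t) = per(M_{n,ℓ}(s,t))`. -/
def P {R : Type*} [CommRing R] (n ℓ : ℕ) (s t : R) : R :=
  permanent (Mmat n ℓ s t)

/-!
Expanding `per (t • J + diagonal d)` along a permutation `σ`, a set `S` of rows taking the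
diagonal summand contributes `∏_{i ∈ S} d i * t ^ (n - |S|)` exactly when `σ` fixes `S`
pointwise, which happens for `(n - |S|)!` permutations. For `M_{n,ℓ}` this gives
`P_{n,ℓ}(s,t) = Σ_k C(n-ℓ,k) (n-k)! s^k t^(n-k)`. Summing against `C(n,ℓ) x^ℓ`, the identity
`C(n,ℓ) C(n-ℓ,k) = C(n,k) C(n-k,ℓ)` and the binomial theorem collect the coefficient of
`(n-k)! s^k t^(n-k)` into `C(n,k) (1+x)^(n-k)`, which is the same expansion of
`P_{n,0}(s, (1+x) t)`.
-/

open Finset Equiv Nat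

section Permanent

variable {α R : Type*} [Fintype α] [DecidableEq α] [CommSemiring R]

theorem card_perm_fixing (S : Finset α) :
    #{σ : Perm α | ∀ i ∈ S, σ i = i} = (Fintype.card α - #S)! := by
  rw [← Fintype.card_subtype]
  have e : {σ : Perm α // ∀ i ∈ S, σ i = i} ≃ Perm {i : α // i ∉ S} :=
    (Equiv.subtypeEquivRight fun σ => by simp).trans
      (Perm.subtypeEquivSubtypePerm fun i => i ∉ S).symm
  rw [Fintype.card_congr e, Fintype.card_perm, Fintype.card_subtype_compl, Fintype.card_coe]

theorem permanent_const_add_diagonal (t : R) (d : α → R) :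
    permanent (Matrix.of fun i j => t + if i = j then d i else 0) =
      ∑ S : Finset α, (∏ i ∈ S, d i) *
        ((Fintype.card α - #S)! * t ^ (Fintype.card α - #S)) := by
  have expand : ∀ σ : Perm α, ∏ i, (t + if i = σ i then d i else 0) =
      ∑ S : Finset α, if ∀ i ∈ S, σ i = i then
        (∏ i ∈ S, d i) * t ^ (Fintype.card α - #S) else 0 := by
    intro σ
    simp_rw [add_comm t, prod_add, powerset_univ, prod_ite_zero, prod_const, ite_mul, zero_mul,
      card_univ_sdiff, eq_comm]
  simp_rw [permanent, Matrix.of_apply, expand]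
  rw [sum_comm]
  refine sum_congr rfl fun S _ => ?_
  rw [← sum_filter, sum_const, card_perm_fixing, nsmul_eq_mul]
  ring

end Permanent

theorem sum_range_choose_mul_of_le {R : Type*} [Semiring R] (f : ℕ → R) {m n : ℕ}
    (h : m ≤ n) :
    ∑ k ∈ range (m + 1), (m.choose k : R) * f k = ∑ k ∈ range (n + 1), (m.choose k : R) * f k :=
  sum_subset (range_subset_range.2 (by omega)) fun k _ hk => by
    rw [choose_eq_zero_of_lt (by simpa using hk), cast_zero, zero_mul]

theorem choose_mul_choose_sub_comm (n a b : ℕ) :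
    n.choose a * (n - a).choose b = n.choose b * (n - b).choose a := by
  have ha := Nat.choose_mul (n := n) (k := a + b) (s := a) (le_add_right a b)
  have hb := Nat.choose_mul (n := n) (k := a + b) (s := b) (le_add_left b a)
  rw [Nat.add_sub_cancel_left] at ha
  rw [Nat.add_sub_cancel] at hb
  rw [← ha, ← hb, choose_symm_add]

theorem sum_range_choose_mul_pow_of_le {R : Type*} [CommSemiring R] (x : R) {m n : ℕ}
    (h : m ≤ n) : ∑ k ∈ range (n + 1), (m.choose k : R) * x ^ k = (1 + x) ^ m := by
  rw [← sum_range_choose_mul_of_le _ h, add_comm 1 x, add_pow]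
  simp only [one_pow, mul_one, mul_comm]

theorem P_eq_sum {R : Type*} [CommRing R] (n ℓ : ℕ) (s t : R) :
    P n ℓ s t = ∑ k ∈ range (n + 1),
      ((n - ℓ).choose k : R) * ((n - k)! * s ^ k * t ^ (n - k)) := by
  set T : Finset (Fin n) := {i | (i : ℕ) < n - ℓ}
  have hM : Mmat n ℓ s t = Matrix.of fun i j => t + if i = j then
      (if i ∈ T then s else 0) else 0 := by
    ext i j
    simp [Mmat, T, ite_and]
  rw [P, hM, permanent_const_add_diagonal]
  simp_rw [prod_ite_zero, prod_const, ite_mul, zero_mul, ← subset_iff]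
  have hT : #T = n - ℓ := by
    rw [Fin.card_filter_val_lt, min_eq_right (sub_le n ℓ)]
  rw [← sum_filter, filter_subset_univ, Fintype.card_fin, sum_powerset_apply_card
    (fun k => s ^ k * ((n - k)! * t ^ (n - k))), hT]
  simp only [nsmul_eq_mul]
  rw [sum_range_choose_mul_of_le _ (sub_le n ℓ)]
  exact sum_congr rfl fun k _ => by ring

/-- The associated polynomial: `Q_n(x) = Σ_{ℓ=0}^{n} C(n,ℓ) x^ℓ P_{n,ℓ}(s,t)
= P_{n,0}(s, t + xt)`, the permanent of `s·I_n + (t+xt)·J_n`. -/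
theorem stmt16 {R : Type*} [CommRing R] (s t x : R) (n : ℕ) :
    ∑ ℓ ∈ Finset.range (n + 1), (n.choose ℓ : R) * x ^ ℓ * P n ℓ s t =
      P n 0 s (t + x * t) := by
  calc ∑ ℓ ∈ range (n + 1), (n.choose ℓ : R) * x ^ ℓ * P n ℓ s t
      = ∑ k ∈ range (n + 1), ∑ ℓ ∈ range (n + 1), (n.choose k : R) *
          (((n - k).choose ℓ : R) * x ^ ℓ) * ((n - k)! * s ^ k * t ^ (n - k)) := by
        simp_rw [P_eq_sum, mul_sum]
        rw [sum_comm]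
        refine sum_congr rfl fun k _ => sum_congr rfl fun ℓ _ => ?_
        have h := congrArg (Nat.cast (R := R)) (choose_mul_choose_sub_comm n ℓ k)
        push_cast at h
        linear_combination x ^ ℓ * ((n - k)! * s ^ k * t ^ (n - k)) * h
    _ = ∑ k ∈ range (n + 1), (n.choose k : R) * (1 + x) ^ (n - k) *
          ((n - k)! * s ^ k * t ^ (n - k)) := by
        refine sum_congr rfl fun k _ => ?_
        rw [← sum_mul, ← mul_sum, sum_range_choose_mul_pow_of_le x (sub_le n k)]
    _ = P n 0 s (t + x * t) := by
        rw [P_eq_sum, Nat.sub_zero, show t + x * t = (1 + x) * t by ring]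
        exact sum_congr rfl fun k _ => by rw [mul_pow]; ring
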